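/- Let F = (U,V,W,S) be any factor quadruple with dist(F,F⋆) < σ_min(X⋆). Then the infimum defining dist(F,F⋆) is attained: there exist invertible matrices Q_k ∈ GL(r_k), k = 1,2,3, such that ‖(U·Q1−U⋆)·Σ⋆,1‖_F² + ‖(V·Q2−V⋆)·Σ⋆,2‖_F² + ‖(W·Q3−W⋆)·Σ⋆,3‖_F² + ‖(Q1⁻¹,Q2⁻¹,Q3⁻¹)·S − S⋆‖_F² = dist²(F,F⋆). -/

import Mathlib

open Matrix MeasureTheory
open scoped Kronecker Classical BigOperators

namespace ScaledGD

noncomputable section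

abbrev Tensor (n1 n2 n3 : ℕ) := Fin n1 → Fin n2 → Fin n3 → ℝ

/-- mode-1 matricization, columns indexed by (i3, i2) to match the Kronecker convention -/
def M1 {n1 n2 n3 : ℕ} (X : Tensor n1 n2 n3) : Matrix (Fin n1) (Fin n3 × Fin n2) ℝ :=
  Matrix.of fun i p => X i p.2 p.1

def M2 {n1 n2 n3 : ℕ} (X : Tensor n1 n2 n3) : Matrix (Fin n2) (Fin n3 × Fin n1) ℝ :=
  Matrix.of fun i p => X p.2 i p.1

def M3 {n1 n2 n3 : ℕ} (X : Tensor n1 n2 n3) : Matrix (Fin n3) (Fin n2 × Fin n1) ℝ :=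
  Matrix.of fun i p => X p.2 p.1 i

/-- Tucker product (A,B,C)·S -/
def tucker {m1 m2 m3 r1 r2 r3 : ℕ}
    (A : Matrix (Fin m1) (Fin r1) ℝ) (B : Matrix (Fin m2) (Fin r2) ℝ)
    (C : Matrix (Fin m3) (Fin r3) ℝ) (S : Tensor r1 r2 r3) : Tensor m1 m2 m3 :=
  fun i1 i2 i3 => ∑ j1, ∑ j2, ∑ j3, A i1 j1 * B i2 j2 * C i3 j3 * S j1 j2 j3

/-- Frobenius norm of a matrix -/
def frob {m n : Type*} [Fintype m] [Fintype n] (A : Matrix m n ℝ) : ℝ :=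
  Real.sqrt (∑ i, ∑ j, (A i j) ^ 2)

/-- Frobenius norm of a tensor -/
def frobT {n1 n2 n3 : ℕ} (X : Tensor n1 n2 n3) : ℝ :=
  Real.sqrt (∑ i1, ∑ i2, ∑ i3, (X i1 i2 i3) ^ 2)

def innerT {n1 n2 n3 : ℕ} (X Y : Tensor n1 n2 n3) : ℝ :=
  ∑ i1, ∑ i2, ∑ i3, X i1 i2 i3 * Y i1 i2 i3

def innerM {m n : Type*} [Fintype m] [Fintype n] (A B : Matrix m n ℝ) : ℝ :=
  ∑ i, ∑ j, A i j * B i j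

def rowNorm {m n : Type*} [Fintype n] (A : Matrix m n ℝ) (i : m) : ℝ :=
  Real.sqrt (∑ j, (A i j) ^ 2)

/-- ‖·‖_{2,∞}: largest ℓ2 norm of the rows -/
def norm2inf {m n : Type*} [Fintype m] [Fintype n] (A : Matrix m n ℝ) : ℝ :=
  ⨆ i, rowNorm A i

def vecNorm {n : Type*} [Fintype n] (x : n → ℝ) : ℝ :=
  Real.sqrt (∑ i, (x i) ^ 2)

/-- spectral norm -/
def opNorm {m n : Type*} [Fintype m] [Fintype n] (A : Matrix m n ℝ) : ℝ :=
  sSup { c | ∃ x : n → ℝ, vecNorm x ≤ 1 ∧ c = vecNorm (A.mulVec x) }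

/-- a factor quadruple -/
structure Quad (n1 n2 n3 r1 r2 r3 : ℕ) where
  U : Matrix (Fin n1) (Fin r1) ℝ
  V : Matrix (Fin n2) (Fin r2) ℝ
  W : Matrix (Fin n3) (Fin r3) ℝ
  S : Tensor r1 r2 r3

variable {n1 n2 n3 r1 r2 r3 : ℕ}

/-- the tensor (U,V,W)·S represented by a quadruple -/
def Quad.X (F : Quad n1 n2 n3 r1 r2 r3) : Tensor n1 n2 n3 := tucker F.U F.V F.W F.S

def breveU (F : Quad n1 n2 n3 r1 r2 r3) : Matrix (Fin n3 × Fin n2) (Fin r1) ℝ :=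
  (F.W ⊗ₖ F.V) * (M1 F.S)ᵀ

def breveV (F : Quad n1 n2 n3 r1 r2 r3) : Matrix (Fin n3 × Fin n1) (Fin r2) ℝ :=
  (F.W ⊗ₖ F.U) * (M2 F.S)ᵀ

def breveW (F : Quad n1 n2 n3 r1 r2 r3) : Matrix (Fin n2 × Fin n1) (Fin r3) ℝ :=
  (F.V ⊗ₖ F.U) * (M3 F.S)ᵀ


/-- a tangent-space style tensor (used in Lemma on tangent concentration) -/
def tangentT (Fs : Quad n1 n2 n3 r1 r2 r3) (U' : Matrix (Fin n1) (Fin r1) ℝ)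
    (V' : Matrix (Fin n2) (Fin r2) ℝ) (W' : Matrix (Fin n3) (Fin r3) ℝ)
    (S1 S2 S3 : Tensor r1 r2 r3) : Tensor n1 n2 n3 :=
  tucker U' Fs.V Fs.W S1 + tucker Fs.U V' Fs.W S2 + tucker Fs.U Fs.V W' S3

/-- squared scaled distance (infimum over invertible alignment matrices) -/
def distSq (σ1 : Fin r1 → ℝ) (σ2 : Fin r2 → ℝ) (σ3 : Fin r3 → ℝ)
    (F Fs : Quad n1 n2 n3 r1 r2 r3) : ℝ :=
  sInf { d : ℝ | ∃ (Q1 : Matrix (Fin r1) (Fin r1) ℝ) (Q2 : Matrix (Fin r2) (Fin r2) ℝ)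
      (Q3 : Matrix (Fin r3) (Fin r3) ℝ), IsUnit Q1.det ∧ IsUnit Q2.det ∧ IsUnit Q3.det ∧
      d = (frob ((F.U * Q1 - Fs.U) * Matrix.diagonal σ1)) ^ 2
        + (frob ((F.V * Q2 - Fs.V) * Matrix.diagonal σ2)) ^ 2
        + (frob ((F.W * Q3 - Fs.W) * Matrix.diagonal σ3)) ^ 2
        + (frobT (tucker Q1⁻¹ Q2⁻¹ Q3⁻¹ F.S - Fs.S)) ^ 2 }

def dist (σ1 : Fin r1 → ℝ) (σ2 : Fin r2 → ℝ) (σ3 : Fin r3 → ℝ)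
    (F Fs : Quad n1 n2 n3 r1 r2 r3) : ℝ :=
  Real.sqrt (distSq σ1 σ2 σ3 F Fs)

def firstVal {r : ℕ} (σ : Fin r → ℝ) : ℝ := if h : 0 < r then σ ⟨0, h⟩ else 0

def lastVal {r : ℕ} (σ : Fin r → ℝ) : ℝ := if h : 0 < r then σ ⟨r - 1, by omega⟩ else 0

def sigmaMax (σ1 : Fin r1 → ℝ) (σ2 : Fin r2 → ℝ) (σ3 : Fin r3 → ℝ) : ℝ :=
  max (firstVal σ1) (max (firstVal σ2) (firstVal σ3))

def sigmaMin (σ1 : Fin r1 → ℝ) (σ2 : Fin r2 → ℝ) (σ3 : Fin r3 → ℝ) : ℝ :=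
  min (lastVal σ1) (min (lastVal σ2) (lastVal σ3))

def kappa (σ1 : Fin r1 → ℝ) (σ2 : Fin r2 → ℝ) (σ3 : Fin r3 → ℝ) : ℝ :=
  sigmaMax σ1 σ2 σ3 / sigmaMin σ1 σ2 σ3

def nmax (n1 n2 n3 : ℕ) : ℕ := max n1 (max n2 n3)

/-- the ground truth structural assumptions: orthonormal factors, and the core tensor
matricizations have Gram matrix `Σ⋆ₖ²` where the `σk` are positive and decreasing
(i.e. they are the nonzero singular values of `M_k(X⋆)` in decreasing order). -/
def GroundTruth (σ1 : Fin r1 → ℝ) (σ2 : Fin r2 → ℝ) (σ3 : Fin r3 → ℝ)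
    (Fs : Quad n1 n2 n3 r1 r2 r3) : Prop :=
  (Fs.U)ᵀ * Fs.U = 1 ∧ (Fs.V)ᵀ * Fs.V = 1 ∧ (Fs.W)ᵀ * Fs.W = 1
  ∧ M1 Fs.S * (M1 Fs.S)ᵀ = Matrix.diagonal (fun i => (σ1 i) ^ 2)
  ∧ M2 Fs.S * (M2 Fs.S)ᵀ = Matrix.diagonal (fun i => (σ2 i) ^ 2)
  ∧ M3 Fs.S * (M3 Fs.S)ᵀ = Matrix.diagonal (fun i => (σ3 i) ^ 2)
  ∧ (∀ i, 0 < σ1 i) ∧ (∀ i, 0 < σ2 i) ∧ (∀ i, 0 < σ3 i)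
  ∧ (∀ i j : Fin r1, i ≤ j → σ1 j ≤ σ1 i)
  ∧ (∀ i j : Fin r2, i ≤ j → σ2 j ≤ σ2 i)
  ∧ (∀ i j : Fin r3, i ≤ j → σ3 j ≤ σ3 i)

/-- μ-incoherence of the ground truth -/
def Incoherent (μ : ℝ) (Fs : Quad n1 n2 n3 r1 r2 r3) : Prop :=
  (n1 : ℝ) / r1 * (norm2inf Fs.U) ^ 2 ≤ μ
  ∧ (n2 : ℝ) / r2 * (norm2inf Fs.V) ^ 2 ≤ μ
  ∧ (n3 : ℝ) / r3 * (norm2inf Fs.W) ^ 2 ≤ μ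

/-- one scaled gradient step driven by the "error" tensor E -/
def gdStep (η : ℝ) (E : Tensor n1 n2 n3) (F : Quad n1 n2 n3 r1 r2 r3) :
    Quad n1 n2 n3 r1 r2 r3 where
  U := F.U - η • (M1 E * breveU F * ((breveU F)ᵀ * breveU F)⁻¹)
  V := F.V - η • (M2 E * breveV F * ((breveV F)ᵀ * breveV F)⁻¹)
  W := F.W - η • (M3 E * breveW F * ((breveW F)ᵀ * breveW F)⁻¹)
  S := F.S - η • tucker (((F.U)ᵀ * F.U)⁻¹ * (F.U)ᵀ) (((F.V)ᵀ * F.V)⁻¹ * (F.V)ᵀ)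
      (((F.W)ᵀ * F.W)⁻¹ * (F.W)ᵀ) E

/-- row rescaling factor `1 ∧ B/x` (with the degenerate case x = 0 giving factor 1) -/
def scaleFac (B : ℝ) (n : ℕ) (x : ℝ) : ℝ :=
  if Real.sqrt n * x = 0 then 1 else min 1 (B / (Real.sqrt n * x))

/-- the scaled projection P_B -/
def scaledProj (B : ℝ) (F : Quad n1 n2 n3 r1 r2 r3) : Quad n1 n2 n3 r1 r2 r3 where
  U := Matrix.of fun i j => scaleFac B n1 (rowNorm (F.U * (breveU F)ᵀ) i) * F.U i j
  V := Matrix.of fun i j => scaleFac B n2 (rowNorm (F.V * (breveV F)ᵀ) i) * F.V i j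
  W := Matrix.of fun i j => scaleFac B n3 (rowNorm (F.W * (breveW F)ᵀ) i) * F.W i j
  S := F.S

def IncoherenceCond (B : ℝ) (F : Quad n1 n2 n3 r1 r2 r3) : Prop :=
  Real.sqrt n1 * norm2inf (F.U * (breveU F)ᵀ) ≤ B
  ∧ Real.sqrt n2 * norm2inf (F.V * (breveV F)ᵀ) ≤ B
  ∧ Real.sqrt n3 * norm2inf (F.W * (breveW F)ᵀ) ≤ B

/-- P_Ω : keep the observed entries, zero elsewhere -/
def sampleT (ω : Fin n1 × Fin n2 × Fin n3 → Bool) (X : Tensor n1 n2 n3) : Tensor n1 n2 n3 :=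
  fun i1 i2 i3 => if ω (i1, i2, i3) then X i1 i2 i3 else 0

/-- Bernoulli(p) distribution on Bool -/
def bernoulliBool (p : ℝ) : Measure Bool :=
  (Real.toNNReal p) • Measure.dirac true + (Real.toNNReal (1 - p)) • Measure.dirac false

instance (p : ℝ) : IsFiniteMeasure (bernoulliBool p) := by
  unfold bernoulliBool; infer_instance

/-- i.i.d. Bernoulli sampling of the indices -/
def berMeasure (n1 n2 n3 : ℕ) (p : ℝ) : Measure (Fin n1 × Fin n2 × Fin n3 → Bool) :=
  Measure.pi fun _ => bernoulliBool p

/-- zero out the diagonal of a square matrix -/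
def offdiag {N : Type*} [DecidableEq N] (G : Matrix N N ℝ) : Matrix N N ℝ :=
  Matrix.of fun i j => if i = j then 0 else G i j

/-- `U` consists of (some choice of) top-r eigenvectors of the symmetric matrix G:
orthonormal columns which are eigenvectors, such that any eigenvector orthogonal to
all columns of U has eigenvalue no larger than the eigenvalues of the columns. -/
def IsTopEigenvectors {N : Type*} [Fintype N] {r : ℕ} (G : Matrix N N ℝ)
    (U : Matrix N (Fin r) ℝ) : Prop :=
  Uᵀ * U = 1 ∧ ∃ μ : Fin r → ℝ,
    (∀ j, G.mulVec (fun i => U i j) = μ j • (fun i => U i j))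
    ∧ ∀ (v : N → ℝ) (lam : ℝ), v ≠ 0 → G.mulVec v = lam • v →
        (∀ j, ∑ i, v i * U i j = 0) → ∀ j, lam ≤ μ j

/-- spectral initialization (before projection) for tensor completion -/
def SpectralInitTC (p : ℝ) (Y : Tensor n1 n2 n3) (F : Quad n1 n2 n3 r1 r2 r3) : Prop :=
  IsTopEigenvectors (offdiag ((p ^ 2)⁻¹ • (M1 Y * (M1 Y)ᵀ))) F.U
  ∧ IsTopEigenvectors (offdiag ((p ^ 2)⁻¹ • (M2 Y * (M2 Y)ᵀ))) F.V
  ∧ IsTopEigenvectors (offdiag ((p ^ 2)⁻¹ • (M3 Y * (M3 Y)ᵀ))) F.W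
  ∧ F.S = p⁻¹ • tucker (F.U)ᵀ (F.V)ᵀ (F.W)ᵀ Y

/-- HOSVD with multilinear rank (r1,r2,r3) -/
def IsHOSVD (X : Tensor n1 n2 n3) (F : Quad n1 n2 n3 r1 r2 r3) : Prop :=
  IsTopEigenvectors (M1 X * (M1 X)ᵀ) F.U
  ∧ IsTopEigenvectors (M2 X * (M2 X)ᵀ) F.V
  ∧ IsTopEigenvectors (M3 X * (M3 X)ᵀ) F.W
  ∧ F.S = tucker (F.U)ᵀ (F.V)ᵀ (F.W)ᵀ X

/-- the measurement map A -/
def Amap {m : ℕ} (Ad : Fin m → Tensor n1 n2 n3) (X : Tensor n1 n2 n3) : Fin m → ℝ :=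
  fun i => innerT (Ad i) X

/-- the adjoint A* -/
def Aadj {m : ℕ} (Ad : Fin m → Tensor n1 n2 n3) (y : Fin m → ℝ) : Tensor n1 n2 n3 :=
  fun i1 i2 i3 => ∑ i, y i * Ad i i1 i2 i3

/-- Gaussian design: all entries of the m measurement tensors are i.i.d. N(0,1/m) -/
def gaussDesign (m n1 n2 n3 : ℕ) : Measure (Fin m → Tensor n1 n2 n3) :=
  Measure.pi fun _ => Measure.pi fun _ => Measure.pi fun _ => Measure.pi fun _ =>
    ProbabilityTheory.gaussianReal 0 (m : NNReal)⁻¹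

/-- tensor restricted isometry property -/
def TRIP {m : ℕ} (Ad : Fin m → Tensor n1 n2 n3) (r1' r2' r3' : ℕ) (δ : ℝ) : Prop :=
  ∀ X : Tensor n1 n2 n3, (M1 X).rank ≤ r1' → (M2 X).rank ≤ r2' → (M3 X).rank ≤ r3' →
    (1 - δ) * (frobT X) ^ 2 ≤ ∑ i, (innerT (Ad i) X) ^ 2
    ∧ ∑ i, (innerT (Ad i) X) ^ 2 ≤ (1 + δ) * (frobT X) ^ 2

/-- ε-closeness in the aligned sense -/
def alignedClose (σ1 : Fin r1 → ℝ) (σ2 : Fin r2 → ℝ) (σ3 : Fin r3 → ℝ)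
    (F Fs : Quad n1 n2 n3 r1 r2 r3) (ε : ℝ) : Prop :=
  (frob ((F.U - Fs.U) * Matrix.diagonal σ1)) ^ 2
  + (frob ((F.V - Fs.V) * Matrix.diagonal σ2)) ^ 2
  + (frob ((F.W - Fs.W) * Matrix.diagonal σ3)) ^ 2
  + (frobT (F.S - Fs.S)) ^ 2 ≤ ε ^ 2 * (sigmaMin σ1 σ2 σ3) ^ 2

/-- the alignment equations -/
def AlignEqs (σ1 : Fin r1 → ℝ) (σ2 : Fin r2 → ℝ) (σ3 : Fin r3 → ℝ)
    (F Fs : Quad n1 n2 n3 r1 r2 r3) : Prop :=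
  (F.U)ᵀ * (F.U - Fs.U) * (Matrix.diagonal σ1 * Matrix.diagonal σ1)
      = M1 (F.S - Fs.S) * (M1 F.S)ᵀ
  ∧ (F.V)ᵀ * (F.V - Fs.V) * (Matrix.diagonal σ2 * Matrix.diagonal σ2)
      = M2 (F.S - Fs.S) * (M2 F.S)ᵀ
  ∧ (F.W)ᵀ * (F.W - Fs.W) * (Matrix.diagonal σ3 * Matrix.diagonal σ3)
      = M3 (F.S - Fs.S) * (M3 F.S)ᵀ

/-- `(UᵀU)^{-1/2}`: inverse of the positive semidefinite square root of the Gram matrix -/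
def invSqrtGram {m r : ℕ} (U : Matrix (Fin m) (Fin r) ℝ) : Matrix (Fin r) (Fin r) ℝ :=
  if h : (Uᵀ * U).PosSemidef then
    ((h.1.eigenvectorUnitary : Matrix (Fin r) (Fin r) ℝ) *
      Matrix.diagonal ((RCLike.ofReal : ℝ → ℝ) ∘ (Real.sqrt ·) ∘ h.1.eigenvalues) *
      (star h.1.eigenvectorUnitary : Matrix (Fin r) (Fin r) ℝ))⁻¹ else 1

end



/-! ### Auxiliary lemmas for the attainment of the distance infimum -/

section AuxAttain

variable {m n : Type*} [Fintype m] [Fintype n]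

lemma frob_nonneg (A : Matrix m n ℝ) : 0 ≤ frob A := Real.sqrt_nonneg _

lemma sq_frob (A : Matrix m n ℝ) : frob A ^ 2 = ∑ i, ∑ j, (A i j) ^ 2 :=
  Real.sq_sqrt (by positivity)

lemma frobT_nonneg {a b c : ℕ} (X : Tensor a b c) : 0 ≤ frobT X := Real.sqrt_nonneg _

lemma sq_frobT {a b c : ℕ} (X : Tensor a b c) :
    frobT X ^ 2 = ∑ i1, ∑ i2, ∑ i3, (X i1 i2 i3) ^ 2 :=
  Real.sq_sqrt (by positivity)

lemma vecNorm_nonneg (x : n → ℝ) : 0 ≤ vecNorm x := Real.sqrt_nonneg _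

lemma sq_vecNorm (x : n → ℝ) : vecNorm x ^ 2 = ∑ i, (x i) ^ 2 :=
  Real.sq_sqrt (by positivity)

lemma vecNorm_eq_zero {x : n → ℝ} (h : vecNorm x = 0) : x = 0 := by
  have h2 : ∑ i, (x i)^2 = 0 := by
    have := sq_vecNorm x; rw [h] at this; simpa using this.symm
  funext i
  have := (Finset.sum_eq_zero_iff_of_nonneg (fun i _ => sq_nonneg (x i))).mp h2 i
    (Finset.mem_univ i)
  exact pow_eq_zero_iff (by norm_num) |>.mp this

lemma entry_le_frob (A : Matrix m n ℝ) (i : m) (j : n) : |A i j| ≤ frob A := by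
  rw [← Real.sqrt_sq_eq_abs]
  apply Real.sqrt_le_sqrt
  calc A i j ^ 2 ≤ ∑ j', A i j' ^ 2 :=
        Finset.single_le_sum (f := fun j' => A i j' ^ 2) (fun j' _ => sq_nonneg _)
          (Finset.mem_univ j)
    _ ≤ ∑ i', ∑ j', A i' j' ^ 2 :=
        Finset.single_le_sum (f := fun i' => ∑ j', A i' j' ^ 2)
          (fun i' _ => Finset.sum_nonneg fun j' _ => sq_nonneg _) (Finset.mem_univ i)

lemma vecNorm_mulVec_le (A : Matrix m n ℝ) (z : n → ℝ) :
    vecNorm (A.mulVec z) ≤ frob A * vecNorm z := by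
  have h : ∑ i, (A.mulVec z i)^2 ≤ (∑ i, ∑ j, A i j ^2) * ∑ j, z j ^ 2 := by
    rw [Finset.sum_mul]
    apply Finset.sum_le_sum
    intro i _
    exact Finset.sum_mul_sq_le_sq_mul_sq Finset.univ (fun j => A i j) z
  calc vecNorm (A.mulVec z) = Real.sqrt (∑ i, (A.mulVec z i)^2) := rfl
    _ ≤ Real.sqrt ((∑ i, ∑ j, A i j ^2) * ∑ j, z j ^ 2) := Real.sqrt_le_sqrt h
    _ = frob A * vecNorm z := by
        rw [Real.sqrt_mul (by positivity)]; rfl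

lemma vecNorm_add_le (x y : n → ℝ) : vecNorm (x + y) ≤ vecNorm x + vecNorm y := by
  have hcs : ∑ i, x i * y i ≤ vecNorm x * vecNorm y := by
    have h := Finset.sum_mul_sq_le_sq_mul_sq Finset.univ x y
    have h2 : (∑ i, x i * y i)^2 ≤ (vecNorm x * vecNorm y)^2 := by
      rw [mul_pow, sq_vecNorm, sq_vecNorm]; exact h
    have hnn : (0:ℝ) ≤ vecNorm x * vecNorm y :=
      mul_nonneg (vecNorm_nonneg _) (vecNorm_nonneg _)
    exact (abs_le_of_sq_le_sq' h2 hnn).2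
  have hsq : vecNorm (x + y) ^ 2 ≤ (vecNorm x + vecNorm y) ^ 2 := by
    rw [sq_vecNorm]
    have hexp : ∑ i, (x i + y i)^2 = (∑ i, x i ^2) + 2 * (∑ i, x i * y i) + ∑ i, y i ^2 := by
      rw [Finset.mul_sum, ← Finset.sum_add_distrib, ← Finset.sum_add_distrib]
      apply Finset.sum_congr rfl; intro i _; ring
    simp only [Pi.add_apply]
    rw [hexp, ← sq_vecNorm x, ← sq_vecNorm y]
    nlinarith [hcs]
  have := Real.sqrt_le_sqrt hsq
  rwa [Real.sqrt_sq (vecNorm_nonneg _),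
    Real.sqrt_sq (add_nonneg (vecNorm_nonneg _) (vecNorm_nonneg _))] at this

lemma vecNorm_sub_le' (x y : n → ℝ) : vecNorm x - vecNorm y ≤ vecNorm (x - y) := by
  have := vecNorm_add_le (x - y) y
  simp only [sub_add_cancel] at this
  linarith

lemma vecNorm_orth [DecidableEq n] {Us : Matrix m n ℝ} (hUs : Usᵀ * Us = 1) (w : n → ℝ) :
    vecNorm (Us.mulVec w) = vecNorm w := by
  unfold vecNorm
  congr 1
  have h1 : ∑ i, (Us.mulVec w i)^2 = (Us.mulVec w) ⬝ᵥ (Us.mulVec w) := by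
    unfold dotProduct; apply Finset.sum_congr rfl; intro i _; ring
  have h2 : ∑ i, (w i)^2 = w ⬝ᵥ w := by
    unfold dotProduct; apply Finset.sum_congr rfl; intro i _; ring
  rw [h1, h2, Matrix.dotProduct_mulVec]
  have h3 : (Us.mulVec w) ᵥ* Us = (Usᵀ * Us).mulVec w := by
    rw [← Matrix.mulVec_transpose, Matrix.mulVec_mulVec]
  rw [h3, hUs, Matrix.one_mulVec]

lemma vecNorm_zero' : vecNorm (0 : n → ℝ) = 0 := by
  unfold vecNorm; simp

lemma entry_le_vecNorm (x : n → ℝ) (i : n) : |x i| ≤ vecNorm x := by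
  rw [← Real.sqrt_sq_eq_abs]
  exact Real.sqrt_le_sqrt (Finset.single_le_sum (f := fun i' => x i' ^ 2)
    (fun i' _ => sq_nonneg _) (Finset.mem_univ i))

lemma vecNorm_le_mul {x y : n → ℝ} {c : ℝ} (hc : 0 ≤ c) (h : ∀ i, |x i| ≤ c * |y i|) :
    vecNorm x ≤ c * vecNorm y := by
  have hsum : ∑ i, x i ^ 2 ≤ c^2 * ∑ i, y i ^2 := by
    rw [Finset.mul_sum]
    apply Finset.sum_le_sum
    intro i _
    have := h i
    nlinarith [abs_nonneg (x i), abs_nonneg (y i), sq_abs (x i), sq_abs (y i)]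
  have := Real.sqrt_le_sqrt hsum
  rwa [Real.sqrt_mul (by positivity), Real.sqrt_sq hc] at this

/-- key lower bound: if `R` is close to an orthonormal `Us` after scaling by `diagonal σ`,
then `R` satisfies the quantitative injectivity bound `(s-b)/s · ‖w‖ ≤ ‖R w‖`. -/
lemma R_lower {nn r : ℕ} {Us R : Matrix (Fin nn) (Fin r) ℝ} {σ : Fin r → ℝ} {s b : ℝ}
    (hUs : Usᵀ * Us = 1) (hσl : ∀ i, s ≤ σ i) (hs : 0 < s)
    (hb : frob ((R - Us) * Matrix.diagonal σ) ≤ b) (w : Fin r → ℝ) :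
    (s - b) / s * vecNorm w ≤ vecNorm (R.mulVec w) := by
  set z : Fin r → ℝ := fun i => w i / σ i with hz
  have hσi : ∀ i, σ i ≠ 0 := fun i => ne_of_gt (lt_of_lt_of_le hs (hσl i))
  have hDz : (Matrix.diagonal σ).mulVec z = w := by
    funext i
    rw [Matrix.mulVec_diagonal]
    exact mul_div_cancel₀ _ (hσi i)
  have hzw : vecNorm z ≤ s⁻¹ * vecNorm w := by
    apply vecNorm_le_mul (by positivity)
    intro i
    have hpos : 0 < σ i := lt_of_lt_of_le hs (hσl i)
    calc |z i| = |w i| / σ i := by rw [hz]; rw [abs_div, abs_of_pos hpos]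
      _ ≤ |w i| / s := by gcongr; exact hσl i
      _ = s⁻¹ * |w i| := by rw [inv_mul_eq_div]
  have hdiff : (R - Us).mulVec w = ((R - Us) * Matrix.diagonal σ).mulVec z := by
    rw [← Matrix.mulVec_mulVec, hDz]
  have h1 : vecNorm ((R - Us).mulVec w) ≤ b / s * vecNorm w := by
    rw [hdiff]
    calc vecNorm (((R - Us) * Matrix.diagonal σ).mulVec z)
        ≤ frob ((R - Us) * Matrix.diagonal σ) * vecNorm z := vecNorm_mulVec_le _ _
      _ ≤ b * (s⁻¹ * vecNorm w) := by
          apply mul_le_mul hb hzw (vecNorm_nonneg _)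
          exact le_trans (frob_nonneg _) hb
      _ = b / s * vecNorm w := by ring
  have h2 : vecNorm w - vecNorm ((R - Us).mulVec w) ≤ vecNorm (R.mulVec w) := by
    have hUw : vecNorm (Us.mulVec w) = vecNorm w := vecNorm_orth hUs w
    have hsub : Us.mulVec w - (-((R - Us).mulVec w)) = R.mulVec w := by
      rw [sub_neg_eq_add, ← Matrix.add_mulVec]
      have hA : Us + (R - Us) = R := by abel
      rw [hA]
    have := vecNorm_sub_le' (Us.mulVec w) (-((R - Us).mulVec w))
    rw [hsub, hUw] at this
    have hneg : vecNorm (-((R - Us).mulVec w)) = vecNorm ((R - Us).mulVec w) := by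
      unfold vecNorm
      congr 1
      apply Finset.sum_congr rfl; intro i _; simp [neg_sq]
    linarith [this, hneg.le, hneg.ge]
  have h3 : vecNorm w - b / s * vecNorm w ≤ vecNorm (R.mulVec w) := by linarith
  calc (s - b) / s * vecNorm w = vecNorm w - b / s * vecNorm w := by
        field_simp
    _ ≤ vecNorm (R.mulVec w) := h3

lemma R_inj {nn r : ℕ} {Us R : Matrix (Fin nn) (Fin r) ℝ} {σ : Fin r → ℝ} {s b : ℝ}
    (hUs : Usᵀ * Us = 1) (hσl : ∀ i, s ≤ σ i) (hs : 0 < s) (hbs : b < s)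
    (hb : frob ((R - Us) * Matrix.diagonal σ) ≤ b) {w : Fin r → ℝ}
    (hw : R.mulVec w = 0) : w = 0 := by
  have h := R_lower hUs hσl hs hb w
  rw [hw, vecNorm_zero'] at h
  have hc : 0 < (s - b) / s := div_pos (by linarith) hs
  have h2 : vecNorm w ≤ 0 := by nlinarith [vecNorm_nonneg w]
  exact vecNorm_eq_zero (le_antisymm h2 (vecNorm_nonneg w))

lemma vecNorm_single {r : ℕ} (j : Fin r) : vecNorm (Pi.single j 1 : Fin r → ℝ) = 1 := by
  unfold vecNorm
  have h : ∑ i : Fin r, ((Pi.single j 1 : Fin r → ℝ) i)^2 = 1 := by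
    rw [Finset.sum_eq_single j]
    · simp
    · intro i _ hij; simp [Pi.single_apply, hij]
    · simp
  rw [h, Real.sqrt_one]

lemma mulVec_single_col {a c : ℕ} (P : Matrix (Fin a) (Fin c) ℝ) (j : Fin c) :
    P.mulVec (Pi.single j 1 : Fin c → ℝ) = fun i => P i j := by
  funext i
  simp [Matrix.mulVec, dotProduct, Pi.single_apply, mul_ite]

lemma R_entry_bound {nn r : ℕ} {Us R : Matrix (Fin nn) (Fin r) ℝ} {σ : Fin r → ℝ} {s b : ℝ}
    (hσl : ∀ i, s ≤ σ i) (hs : 0 < s)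
    (hb : frob ((R - Us) * Matrix.diagonal σ) ≤ b) (i : Fin nn) (j : Fin r) :
    |R i j| ≤ frob Us + b / s := by
  have hpos : 0 < σ j := lt_of_lt_of_le hs (hσl j)
  have h1 : |(R i j - Us i j) * σ j| ≤ b := by
    have := entry_le_frob ((R - Us) * Matrix.diagonal σ) i j
    rw [Matrix.mul_diagonal] at this
    simpa using le_trans this hb
  have h2 : |R i j - Us i j| ≤ b / s := by
    rw [abs_mul, abs_of_pos hpos] at h1
    rw [le_div_iff₀ hs]
    calc |R i j - Us i j| * s ≤ |R i j - Us i j| * σ j := by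
          apply mul_le_mul_of_nonneg_left (hσl j) (abs_nonneg _)
      _ ≤ b := h1
  calc |R i j| ≤ |R i j - Us i j| + |Us i j| := by
        have := abs_add_le (R i j - Us i j) (Us i j); simpa using this
    _ ≤ b / s + frob Us := add_le_add h2 (entry_le_frob Us i j)
    _ = frob Us + b / s := by ring

lemma P_entry_bound {nn r : ℕ} {Us R FU : Matrix (Fin nn) (Fin r) ℝ}
    {P : Matrix (Fin r) (Fin r) ℝ} {σ : Fin r → ℝ} {s b : ℝ}
    (hUs : Usᵀ * Us = 1) (hσl : ∀ i, s ≤ σ i) (hs : 0 < s) (hbs : b < s)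
    (hb : frob ((R - Us) * Matrix.diagonal σ) ≤ b) (hRP : R * P = FU)
    (i j : Fin r) : |P i j| ≤ s / (s - b) * frob FU := by
  set w : Fin r → ℝ := P.mulVec (Pi.single j (1:ℝ)) with hw
  have h1 : (s - b) / s * vecNorm w ≤ vecNorm (R.mulVec w) := R_lower hUs hσl hs hb w
  have h2 : R.mulVec w = FU.mulVec (Pi.single j 1 : Fin r → ℝ) := by
    rw [hw, Matrix.mulVec_mulVec, hRP]
  have h3 : vecNorm (R.mulVec w) ≤ frob FU := by
    rw [h2]
    calc vecNorm (FU.mulVec (Pi.single j 1 : Fin r → ℝ))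
        ≤ frob FU * vecNorm (Pi.single j 1 : Fin r → ℝ) := vecNorm_mulVec_le _ _
      _ = frob FU := by rw [vecNorm_single, mul_one]
  have hcol : w = fun i' => P i' j := mulVec_single_col P j
  have h4 : |P i j| ≤ vecNorm w := by
    conv_lhs => rw [show P i j = w i by rw [hcol]]
    exact entry_le_vecNorm w i
  have hsb : 0 < s - b := by linarith
  have h5 : vecNorm w ≤ s / (s - b) * frob FU := by
    rw [div_mul_eq_mul_div, le_div_iff₀ hsb]
    have h6 : (s - b) * vecNorm w ≤ s * vecNorm (R.mulVec w) := by
      have h7 := mul_le_mul_of_nonneg_left h1 (le_of_lt hs)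
      calc (s - b) * vecNorm w = s * ((s - b) / s * vecNorm w) := by field_simp
        _ ≤ s * vecNorm (R.mulVec w) := h7
    calc vecNorm w * (s - b) = (s - b) * vecNorm w := by ring
      _ ≤ s * vecNorm (R.mulVec w) := h6
      _ ≤ s * frob FU := by apply mul_le_mul_of_nonneg_left h3 (le_of_lt hs)
  exact le_trans h4 h5

lemma cont_frob_sq {γ : Type*} [TopologicalSpace γ] {a b : ℕ}
    {E : γ → Matrix (Fin a) (Fin b) ℝ} (hE : ∀ i j, Continuous fun x => E x i j) :
    Continuous fun x => frob (E x) ^ 2 := by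
  have he : (fun x => frob (E x)^2) = fun x => ∑ i, ∑ j, (E x i j)^2 :=
    funext fun x => sq_frob _
  rw [he]
  exact continuous_finset_sum _ fun i _ => continuous_finset_sum _ fun j _ => (hE i j).pow 2

lemma cont_frobT_sq {γ : Type*} [TopologicalSpace γ] {a b c : ℕ}
    {T : γ → Tensor a b c} (hT : ∀ i1 i2 i3, Continuous fun x => T x i1 i2 i3) :
    Continuous fun x => frobT (T x) ^ 2 := by
  have he : (fun x => frobT (T x)^2) = fun x => ∑ i1, ∑ i2, ∑ i3, (T x i1 i2 i3)^2 :=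
    funext fun x => sq_frobT _
  rw [he]
  exact continuous_finset_sum _ fun i1 _ => continuous_finset_sum _ fun i2 _ =>
    continuous_finset_sum _ fun i3 _ => (hT i1 i2 i3).pow 2

lemma term_le1 {t1 t2 t3 t4 m : ℝ} (h : t1^2 + t2^2 + t3^2 + t4^2 ≤ m) (h1 : 0 ≤ t1) :
    t1 ≤ Real.sqrt m := by
  have hsq : t1^2 ≤ m := by nlinarith [sq_nonneg t2, sq_nonneg t3, sq_nonneg t4]
  have := Real.sqrt_le_sqrt hsq
  rwa [Real.sqrt_sq h1] at this

lemma term_le2 {t1 t2 t3 t4 m : ℝ} (h : t1^2 + t2^2 + t3^2 + t4^2 ≤ m) (h2 : 0 ≤ t2) :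
    t2 ≤ Real.sqrt m := by
  have hsq : t2^2 ≤ m := by nlinarith [sq_nonneg t1, sq_nonneg t3, sq_nonneg t4]
  have := Real.sqrt_le_sqrt hsq
  rwa [Real.sqrt_sq h2] at this

lemma term_le3 {t1 t2 t3 t4 m : ℝ} (h : t1^2 + t2^2 + t3^2 + t4^2 ≤ m) (h3 : 0 ≤ t3) :
    t3 ≤ Real.sqrt m := by
  have hsq : t3^2 ≤ m := by nlinarith [sq_nonneg t1, sq_nonneg t2, sq_nonneg t4]
  have := Real.sqrt_le_sqrt hsq
  rwa [Real.sqrt_sq h3] at this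

end AuxAttain

set_option maxHeartbeats 2000000 in
/-- the infimum defining the scaled distance is attained (Lemma 6). -/
theorem dist_infimum_attained
    (n1 n2 n3 r1 r2 r3 : ℕ) (hn1 : 0 < n1) (hn2 : 0 < n2) (hn3 : 0 < n3)
    (hr1 : 0 < r1) (hr2 : 0 < r2) (hr3 : 0 < r3)
    (σ1 : Fin r1 → ℝ) (σ2 : Fin r2 → ℝ) (σ3 : Fin r3 → ℝ)
    (Fs : Quad n1 n2 n3 r1 r2 r3) (hGT : GroundTruth σ1 σ2 σ3 Fs)
    (F : Quad n1 n2 n3 r1 r2 r3)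
    (hdist : dist σ1 σ2 σ3 F Fs < sigmaMin σ1 σ2 σ3) :
    ∃ (Q1 : Matrix (Fin r1) (Fin r1) ℝ) (Q2 : Matrix (Fin r2) (Fin r2) ℝ)
      (Q3 : Matrix (Fin r3) (Fin r3) ℝ),
      IsUnit Q1.det ∧ IsUnit Q2.det ∧ IsUnit Q3.det ∧
      (frob ((F.U * Q1 - Fs.U) * Matrix.diagonal σ1)) ^ 2
        + (frob ((F.V * Q2 - Fs.V) * Matrix.diagonal σ2)) ^ 2
        + (frob ((F.W * Q3 - Fs.W) * Matrix.diagonal σ3)) ^ 2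
        + (frobT (tucker Q1⁻¹ Q2⁻¹ Q3⁻¹ F.S - Fs.S)) ^ 2
      = distSq σ1 σ2 σ3 F Fs := by
  classical
  obtain ⟨hU, hV, hW, -, -, -, hp1, hp2, hp3, hdec1, hdec2, hdec3⟩ := hGT
  set s := sigmaMin σ1 σ2 σ3 with hsdef
  have hlv1 : lastVal σ1 = σ1 ⟨r1 - 1, by omega⟩ := dif_pos hr1
  have hlv2 : lastVal σ2 = σ2 ⟨r2 - 1, by omega⟩ := dif_pos hr2
  have hlv3 : lastVal σ3 = σ3 ⟨r3 - 1, by omega⟩ := dif_pos hr3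
  have hs : 0 < s := by
    rw [hsdef]
    unfold sigmaMin
    apply lt_min
    · rw [hlv1]; exact hp1 _
    · exact lt_min (by rw [hlv2]; exact hp2 _) (by rw [hlv3]; exact hp3 _)
  have hs1 : ∀ i, s ≤ σ1 i := by
    intro i
    have h1 : s ≤ lastVal σ1 := min_le_left _ _
    have h3 : σ1 ⟨r1 - 1, by omega⟩ ≤ σ1 i :=
      hdec1 i ⟨r1 - 1, by omega⟩ (by rw [Fin.le_def]; simp; omega)
    rw [hlv1] at h1; linarith
  have hs2 : ∀ i, s ≤ σ2 i := by
    intro i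
    have h1 : s ≤ lastVal σ2 := le_trans (min_le_right _ _) (min_le_left _ _)
    have h3 : σ2 ⟨r2 - 1, by omega⟩ ≤ σ2 i :=
      hdec2 i ⟨r2 - 1, by omega⟩ (by rw [Fin.le_def]; simp; omega)
    rw [hlv2] at h1; linarith
  have hs3 : ∀ i, s ≤ σ3 i := by
    intro i
    have h1 : s ≤ lastVal σ3 := le_trans (min_le_right _ _) (min_le_right _ _)
    have h3 : σ3 ⟨r3 - 1, by omega⟩ ≤ σ3 i :=
      hdec3 i ⟨r3 - 1, by omega⟩ (by rw [Fin.le_def]; simp; omega)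
    rw [hlv3] at h1; linarith
  -- the feasible-value set
  set D : Set ℝ := { d : ℝ | ∃ (Q1 : Matrix (Fin r1) (Fin r1) ℝ)
      (Q2 : Matrix (Fin r2) (Fin r2) ℝ)
      (Q3 : Matrix (Fin r3) (Fin r3) ℝ), IsUnit Q1.det ∧ IsUnit Q2.det ∧ IsUnit Q3.det ∧
      d = (frob ((F.U * Q1 - Fs.U) * Matrix.diagonal σ1)) ^ 2
        + (frob ((F.V * Q2 - Fs.V) * Matrix.diagonal σ2)) ^ 2
        + (frob ((F.W * Q3 - Fs.W) * Matrix.diagonal σ3)) ^ 2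
        + (frobT (tucker Q1⁻¹ Q2⁻¹ Q3⁻¹ F.S - Fs.S)) ^ 2 } with hDdef
  have hdS : distSq σ1 σ2 σ3 F Fs = sInf D := by rw [hDdef]; rfl
  have hDne : D.Nonempty := by
    refine ⟨_, 1, 1, 1, ?_, ?_, ?_, rfl⟩ <;> simp
  have hDlb : ∀ e ∈ D, (0:ℝ) ≤ e := by
    rw [hDdef]
    rintro e ⟨Q1, Q2, Q3, -, -, -, rfl⟩
    positivity
  have hbdd : BddBelow D := ⟨0, fun e he => hDlb e he⟩
  have hd0 : (0:ℝ) ≤ sInf D := le_csInf hDne hDlb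
  unfold ScaledGD.dist at hdist
  rw [hdS] at hdist
  have hdlt : sInf D < s ^ 2 := (Real.sqrt_lt' hs).mp hdist
  set m := (sInf D + s ^ 2) / 2 with hmdef
  have hm1 : sInf D < m := by rw [hmdef]; linarith
  have hm2 : m < s ^ 2 := by rw [hmdef]; linarith
  have hm0 : (0:ℝ) ≤ m := by rw [hmdef]; nlinarith
  set b := Real.sqrt m with hbdef
  have hbs : b < s := by rw [hbdef]; exact (Real.sqrt_lt' hs).mpr hm2
  have hb0 : (0:ℝ) ≤ b := Real.sqrt_nonneg _
  -- a feasible value strictly below m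
  obtain ⟨e₀, he₀D, he₀m⟩ := exists_lt_of_csInf_lt hDne hm1
  rw [hDdef] at he₀D
  obtain ⟨Q1₀, Q2₀, Q3₀, hu1₀, hu2₀, hu3₀, he₀⟩ := he₀D
  -- the (R, P) reformulation
  set g : (Matrix (Fin n1) (Fin r1) ℝ × Matrix (Fin n2) (Fin r2) ℝ ×
        Matrix (Fin n3) (Fin r3) ℝ) ×
      (Matrix (Fin r1) (Fin r1) ℝ × Matrix (Fin r2) (Fin r2) ℝ ×
        Matrix (Fin r3) (Fin r3) ℝ) → ℝ :=
    fun x => (frob ((x.1.1 - Fs.U) * Matrix.diagonal σ1)) ^ 2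
      + (frob ((x.1.2.1 - Fs.V) * Matrix.diagonal σ2)) ^ 2
      + (frob ((x.1.2.2 - Fs.W) * Matrix.diagonal σ3)) ^ 2
      + (frobT (tucker x.2.1 x.2.2.1 x.2.2.2 F.S - Fs.S)) ^ 2 with hgdef
  set C := {x : (Matrix (Fin n1) (Fin r1) ℝ × Matrix (Fin n2) (Fin r2) ℝ ×
        Matrix (Fin n3) (Fin r3) ℝ) ×
      (Matrix (Fin r1) (Fin r1) ℝ × Matrix (Fin r2) (Fin r2) ℝ ×
        Matrix (Fin r3) (Fin r3) ℝ) |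
      x.1.1 * x.2.1 = F.U ∧ x.1.2.1 * x.2.2.1 = F.V ∧ x.1.2.2 * x.2.2.2 = F.W ∧ g x ≤ m}
    with hCdef
  -- the witness point in C
  set x₀ := ((F.U * Q1₀, F.V * Q2₀, F.W * Q3₀), (Q1₀⁻¹, Q2₀⁻¹, Q3₀⁻¹)) with hx₀def
  have hg₀ : g x₀ = e₀ := by rw [hgdef]; exact he₀.symm
  have hx₀C : x₀ ∈ C := by
    rw [hCdef]
    refine ⟨Matrix.mul_nonsing_inv_cancel_right _ _ hu1₀,
      Matrix.mul_nonsing_inv_cancel_right _ _ hu2₀,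
      Matrix.mul_nonsing_inv_cancel_right _ _ hu3₀, ?_⟩
    rw [hg₀]; linarith
  have hCne : C.Nonempty := ⟨x₀, hx₀C⟩
  -- continuity
  have hpr1 : Continuous fun x : (Matrix (Fin n1) (Fin r1) ℝ × Matrix (Fin n2) (Fin r2) ℝ ×
      Matrix (Fin n3) (Fin r3) ℝ) × (Matrix (Fin r1) (Fin r1) ℝ ×
      Matrix (Fin r2) (Fin r2) ℝ × Matrix (Fin r3) (Fin r3) ℝ) => x.1.1 :=
    continuous_fst.comp continuous_fst
  have hpr2 : Continuous fun x : (Matrix (Fin n1) (Fin r1) ℝ × Matrix (Fin n2) (Fin r2) ℝ ×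
      Matrix (Fin n3) (Fin r3) ℝ) × (Matrix (Fin r1) (Fin r1) ℝ ×
      Matrix (Fin r2) (Fin r2) ℝ × Matrix (Fin r3) (Fin r3) ℝ) => x.1.2.1 :=
    continuous_fst.comp (continuous_snd.comp continuous_fst)
  have hpr3 : Continuous fun x : (Matrix (Fin n1) (Fin r1) ℝ × Matrix (Fin n2) (Fin r2) ℝ ×
      Matrix (Fin n3) (Fin r3) ℝ) × (Matrix (Fin r1) (Fin r1) ℝ ×
      Matrix (Fin r2) (Fin r2) ℝ × Matrix (Fin r3) (Fin r3) ℝ) => x.1.2.2 :=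
    continuous_snd.comp (continuous_snd.comp continuous_fst)
  have hpp1 : Continuous fun x : (Matrix (Fin n1) (Fin r1) ℝ × Matrix (Fin n2) (Fin r2) ℝ ×
      Matrix (Fin n3) (Fin r3) ℝ) × (Matrix (Fin r1) (Fin r1) ℝ ×
      Matrix (Fin r2) (Fin r2) ℝ × Matrix (Fin r3) (Fin r3) ℝ) => x.2.1 :=
    continuous_fst.comp continuous_snd
  have hpp2 : Continuous fun x : (Matrix (Fin n1) (Fin r1) ℝ × Matrix (Fin n2) (Fin r2) ℝ ×
      Matrix (Fin n3) (Fin r3) ℝ) × (Matrix (Fin r1) (Fin r1) ℝ ×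
      Matrix (Fin r2) (Fin r2) ℝ × Matrix (Fin r3) (Fin r3) ℝ) => x.2.2.1 :=
    continuous_fst.comp (continuous_snd.comp continuous_snd)
  have hpp3 : Continuous fun x : (Matrix (Fin n1) (Fin r1) ℝ × Matrix (Fin n2) (Fin r2) ℝ ×
      Matrix (Fin n3) (Fin r3) ℝ) × (Matrix (Fin r1) (Fin r1) ℝ ×
      Matrix (Fin r2) (Fin r2) ℝ × Matrix (Fin r3) (Fin r3) ℝ) => x.2.2.2 :=
    continuous_snd.comp (continuous_snd.comp continuous_snd)
  have hgcont : Continuous g := by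
    rw [hgdef]
    refine Continuous.add (Continuous.add (Continuous.add ?_ ?_) ?_) ?_
    · exact cont_frob_sq fun i j => by
        simp only [Matrix.mul_diagonal, Matrix.sub_apply]
        exact ((hpr1.matrix_elem i j).sub continuous_const).mul continuous_const
    · exact cont_frob_sq fun i j => by
        simp only [Matrix.mul_diagonal, Matrix.sub_apply]
        exact ((hpr2.matrix_elem i j).sub continuous_const).mul continuous_const
    · exact cont_frob_sq fun i j => by
        simp only [Matrix.mul_diagonal, Matrix.sub_apply]
        exact ((hpr3.matrix_elem i j).sub continuous_const).mul continuous_const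
    · refine cont_frobT_sq fun i1 i2 i3 => ?_
      simp only [Pi.sub_apply, tucker]
      refine Continuous.sub ?_ continuous_const
      refine continuous_finset_sum _ fun j1 _ => continuous_finset_sum _ fun j2 _ =>
        continuous_finset_sum _ fun j3 _ => ?_
      exact (((hpp1.matrix_elem i1 j1).mul (hpp2.matrix_elem i2 j2)).mul
        (hpp3.matrix_elem i3 j3)).mul continuous_const
  -- closedness
  have hCclosed : IsClosed C := by
    rw [hCdef]
    have h1 : IsClosed {x : (Matrix (Fin n1) (Fin r1) ℝ × Matrix (Fin n2) (Fin r2) ℝ ×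
        Matrix (Fin n3) (Fin r3) ℝ) × (Matrix (Fin r1) (Fin r1) ℝ ×
        Matrix (Fin r2) (Fin r2) ℝ × Matrix (Fin r3) (Fin r3) ℝ) | x.1.1 * x.2.1 = F.U} :=
      isClosed_eq (hpr1.matrix_mul hpp1) continuous_const
    have h2 : IsClosed {x : (Matrix (Fin n1) (Fin r1) ℝ × Matrix (Fin n2) (Fin r2) ℝ ×
        Matrix (Fin n3) (Fin r3) ℝ) × (Matrix (Fin r1) (Fin r1) ℝ ×
        Matrix (Fin r2) (Fin r2) ℝ × Matrix (Fin r3) (Fin r3) ℝ) | x.1.2.1 * x.2.2.1 = F.V} :=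
      isClosed_eq (hpr2.matrix_mul hpp2) continuous_const
    have h3 : IsClosed {x : (Matrix (Fin n1) (Fin r1) ℝ × Matrix (Fin n2) (Fin r2) ℝ ×
        Matrix (Fin n3) (Fin r3) ℝ) × (Matrix (Fin r1) (Fin r1) ℝ ×
        Matrix (Fin r2) (Fin r2) ℝ × Matrix (Fin r3) (Fin r3) ℝ) | x.1.2.2 * x.2.2.2 = F.W} :=
      isClosed_eq (hpr3.matrix_mul hpp3) continuous_const
    have h4 : IsClosed {x : (Matrix (Fin n1) (Fin r1) ℝ × Matrix (Fin n2) (Fin r2) ℝ ×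
        Matrix (Fin n3) (Fin r3) ℝ) × (Matrix (Fin r1) (Fin r1) ℝ ×
        Matrix (Fin r2) (Fin r2) ℝ × Matrix (Fin r3) (Fin r3) ℝ) | g x ≤ m} :=
      isClosed_le hgcont continuous_const
    exact h1.inter (h2.inter (h3.inter h4))
  -- boundedness: C lies in a compact box
  set cR1 := frob Fs.U + b / s with hcR1
  set cR2 := frob Fs.V + b / s with hcR2
  set cR3 := frob Fs.W + b / s with hcR3
  set cP1 := s / (s - b) * frob F.U with hcP1
  set cP2 := s / (s - b) * frob F.V with hcP2
  set cP3 := s / (s - b) * frob F.W with hcP3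
  set K := ((Set.univ.pi fun _ : Fin n1 => Set.univ.pi fun _ : Fin r1 =>
        Set.Icc (-cR1) cR1) ×ˢ
      (Set.univ.pi fun _ : Fin n2 => Set.univ.pi fun _ : Fin r2 =>
        Set.Icc (-cR2) cR2) ×ˢ
      (Set.univ.pi fun _ : Fin n3 => Set.univ.pi fun _ : Fin r3 =>
        Set.Icc (-cR3) cR3)) ×ˢ
      ((Set.univ.pi fun _ : Fin r1 => Set.univ.pi fun _ : Fin r1 =>
        Set.Icc (-cP1) cP1) ×ˢ
      (Set.univ.pi fun _ : Fin r2 => Set.univ.pi fun _ : Fin r2 =>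
        Set.Icc (-cP2) cP2) ×ˢ
      (Set.univ.pi fun _ : Fin r3 => Set.univ.pi fun _ : Fin r3 =>
        Set.Icc (-cP3) cP3)) with hKdef
  have hKcomp : IsCompact K := by
    rw [hKdef]
    refine IsCompact.prod (IsCompact.prod ?_ (IsCompact.prod ?_ ?_))
      (IsCompact.prod ?_ (IsCompact.prod ?_ ?_)) <;>
      exact isCompact_univ_pi fun _ => isCompact_univ_pi fun _ => isCompact_Icc
  have hCK : C ⊆ K := by
    rw [hCdef, hKdef]
    rintro x ⟨hx1, hx2, hx3, hxg⟩
    rw [hgdef] at hxg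
    simp only at hxg
    have ht1 : frob ((x.1.1 - Fs.U) * Matrix.diagonal σ1) ≤ b := by
      rw [hbdef]; exact term_le1 hxg (frob_nonneg _)
    have ht2 : frob ((x.1.2.1 - Fs.V) * Matrix.diagonal σ2) ≤ b := by
      rw [hbdef]; exact term_le2 hxg (frob_nonneg _)
    have ht3 : frob ((x.1.2.2 - Fs.W) * Matrix.diagonal σ3) ≤ b := by
      rw [hbdef]; exact term_le3 hxg (frob_nonneg _)
    refine ⟨⟨?_, ?_, ?_⟩, ?_, ?_, ?_⟩
    · exact Set.mem_univ_pi.mpr fun i => Set.mem_univ_pi.mpr fun j =>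
        Set.mem_Icc.mpr (abs_le.mp (R_entry_bound hs1 hs ht1 i j))
    · exact Set.mem_univ_pi.mpr fun i => Set.mem_univ_pi.mpr fun j =>
        Set.mem_Icc.mpr (abs_le.mp (R_entry_bound hs2 hs ht2 i j))
    · exact Set.mem_univ_pi.mpr fun i => Set.mem_univ_pi.mpr fun j =>
        Set.mem_Icc.mpr (abs_le.mp (R_entry_bound hs3 hs ht3 i j))
    · exact Set.mem_univ_pi.mpr fun i => Set.mem_univ_pi.mpr fun j =>
        Set.mem_Icc.mpr (abs_le.mp (P_entry_bound hU hs1 hs hbs ht1 hx1 i j))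
    · exact Set.mem_univ_pi.mpr fun i => Set.mem_univ_pi.mpr fun j =>
        Set.mem_Icc.mpr (abs_le.mp (P_entry_bound hV hs2 hs hbs ht2 hx2 i j))
    · exact Set.mem_univ_pi.mpr fun i => Set.mem_univ_pi.mpr fun j =>
        Set.mem_Icc.mpr (abs_le.mp (P_entry_bound hW hs3 hs hbs ht3 hx3 i j))
  have hCcomp : IsCompact C := hKcomp.of_isClosed_subset hCclosed hCK
  obtain ⟨xm, hxmC, hxmMin⟩ := hCcomp.exists_isMinOn hCne hgcont.continuousOn
  have hxmC' := hxmC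
  rw [hCdef] at hxmC'
  obtain ⟨hc1, hc2, hc3, hcg⟩ := hxmC'
  -- injectivity of the fixed factors
  have ht1₀ : frob ((F.U * Q1₀ - Fs.U) * Matrix.diagonal σ1) ≤ b := by
    have : g x₀ ≤ m := by rw [hg₀]; linarith
    rw [hgdef] at this
    simp only [hx₀def] at this
    rw [hbdef]; exact term_le1 this (frob_nonneg _)
  have ht2₀ : frob ((F.V * Q2₀ - Fs.V) * Matrix.diagonal σ2) ≤ b := by
    have : g x₀ ≤ m := by rw [hg₀]; linarith
    rw [hgdef] at this
    simp only [hx₀def] at this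
    rw [hbdef]; exact term_le2 this (frob_nonneg _)
  have ht3₀ : frob ((F.W * Q3₀ - Fs.W) * Matrix.diagonal σ3) ≤ b := by
    have : g x₀ ≤ m := by rw [hg₀]; linarith
    rw [hgdef] at this
    simp only [hx₀def] at this
    rw [hbdef]; exact term_le3 this (frob_nonneg _)
  have hUinj : ∀ y : Fin r1 → ℝ, F.U.mulVec y = 0 → y = 0 := by
    intro y hy
    have h1 : (F.U * Q1₀).mulVec (Q1₀⁻¹.mulVec y) = 0 := by
      rw [Matrix.mulVec_mulVec, Matrix.mul_nonsing_inv_cancel_right _ _ hu1₀, hy]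
    have h2 : Q1₀⁻¹.mulVec y = 0 := R_inj hU hs1 hs hbs ht1₀ h1
    calc y = (Q1₀ * Q1₀⁻¹).mulVec y := by
          rw [Matrix.mul_nonsing_inv _ hu1₀, Matrix.one_mulVec]
      _ = Q1₀.mulVec (Q1₀⁻¹.mulVec y) := (Matrix.mulVec_mulVec _ _ _).symm
      _ = 0 := by rw [h2, Matrix.mulVec_zero]
  have hVinj : ∀ y : Fin r2 → ℝ, F.V.mulVec y = 0 → y = 0 := by
    intro y hy
    have h1 : (F.V * Q2₀).mulVec (Q2₀⁻¹.mulVec y) = 0 := by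
      rw [Matrix.mulVec_mulVec, Matrix.mul_nonsing_inv_cancel_right _ _ hu2₀, hy]
    have h2 : Q2₀⁻¹.mulVec y = 0 := R_inj hV hs2 hs hbs ht2₀ h1
    calc y = (Q2₀ * Q2₀⁻¹).mulVec y := by
          rw [Matrix.mul_nonsing_inv _ hu2₀, Matrix.one_mulVec]
      _ = Q2₀.mulVec (Q2₀⁻¹.mulVec y) := (Matrix.mulVec_mulVec _ _ _).symm
      _ = 0 := by rw [h2, Matrix.mulVec_zero]
  have hWinj : ∀ y : Fin r3 → ℝ, F.W.mulVec y = 0 → y = 0 := by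
    intro y hy
    have h1 : (F.W * Q3₀).mulVec (Q3₀⁻¹.mulVec y) = 0 := by
      rw [Matrix.mulVec_mulVec, Matrix.mul_nonsing_inv_cancel_right _ _ hu3₀, hy]
    have h2 : Q3₀⁻¹.mulVec y = 0 := R_inj hW hs3 hs hbs ht3₀ h1
    calc y = (Q3₀ * Q3₀⁻¹).mulVec y := by
          rw [Matrix.mul_nonsing_inv _ hu3₀, Matrix.one_mulVec]
      _ = Q3₀.mulVec (Q3₀⁻¹.mulVec y) := (Matrix.mulVec_mulVec _ _ _).symm
      _ = 0 := by rw [h2, Matrix.mulVec_zero]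
  -- the optimal P's are invertible
  have hPdet1 : IsUnit (xm.2.1).det := by
    rw [isUnit_iff_ne_zero]
    intro hdet0
    obtain ⟨v, hv0, hv⟩ := Matrix.exists_mulVec_eq_zero_iff.mpr hdet0
    apply hv0
    apply hUinj
    rw [← hc1, ← Matrix.mulVec_mulVec, hv, Matrix.mulVec_zero]
  have hPdet2 : IsUnit (xm.2.2.1).det := by
    rw [isUnit_iff_ne_zero]
    intro hdet0
    obtain ⟨v, hv0, hv⟩ := Matrix.exists_mulVec_eq_zero_iff.mpr hdet0
    apply hv0
    apply hVinj
    rw [← hc2, ← Matrix.mulVec_mulVec, hv, Matrix.mulVec_zero]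
  have hPdet3 : IsUnit (xm.2.2.2).det := by
    rw [isUnit_iff_ne_zero]
    intro hdet0
    obtain ⟨v, hv0, hv⟩ := Matrix.exists_mulVec_eq_zero_iff.mpr hdet0
    apply hv0
    apply hWinj
    rw [← hc3, ← Matrix.mulVec_mulVec, hv, Matrix.mulVec_zero]
  have hFU : F.U * (xm.2.1)⁻¹ = xm.1.1 := by
    rw [← hc1]; exact Matrix.mul_nonsing_inv_cancel_right _ _ hPdet1
  have hFV : F.V * (xm.2.2.1)⁻¹ = xm.1.2.1 := by
    rw [← hc2]; exact Matrix.mul_nonsing_inv_cancel_right _ _ hPdet2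
  have hFW : F.W * (xm.2.2.2)⁻¹ = xm.1.2.2 := by
    rw [← hc3]; exact Matrix.mul_nonsing_inv_cancel_right _ _ hPdet3
  have hQinv1 : ((xm.2.1)⁻¹)⁻¹ = xm.2.1 := Matrix.nonsing_inv_nonsing_inv _ hPdet1
  have hQinv2 : ((xm.2.2.1)⁻¹)⁻¹ = xm.2.2.1 := Matrix.nonsing_inv_nonsing_inv _ hPdet2
  have hQinv3 : ((xm.2.2.2)⁻¹)⁻¹ = xm.2.2.2 := Matrix.nonsing_inv_nonsing_inv _ hPdet3
  -- the minimum equals the infimum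
  have key : g xm = sInf D := by
    apply le_antisymm
    · apply le_csInf hDne
      intro e heD
      rw [hDdef] at heD
      obtain ⟨Q1', Q2', Q3', hu1', hu2', hu3', rfl⟩ := heD
      by_cases he : (frob ((F.U * Q1' - Fs.U) * Matrix.diagonal σ1)) ^ 2
          + (frob ((F.V * Q2' - Fs.V) * Matrix.diagonal σ2)) ^ 2
          + (frob ((F.W * Q3' - Fs.W) * Matrix.diagonal σ3)) ^ 2
          + (frobT (tucker Q1'⁻¹ Q2'⁻¹ Q3'⁻¹ F.S - Fs.S)) ^ 2 ≤ m
      · have hx'C : ((F.U * Q1', F.V * Q2', F.W * Q3'), (Q1'⁻¹, Q2'⁻¹, Q3'⁻¹)) ∈ C := by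
          rw [hCdef]
          refine ⟨Matrix.mul_nonsing_inv_cancel_right _ _ hu1',
            Matrix.mul_nonsing_inv_cancel_right _ _ hu2',
            Matrix.mul_nonsing_inv_cancel_right _ _ hu3', ?_⟩
          rw [hgdef]
          exact he
        have := isMinOn_iff.mp hxmMin _ hx'C
        calc g xm ≤ g ((F.U * Q1', F.V * Q2', F.W * Q3'), (Q1'⁻¹, Q2'⁻¹, Q3'⁻¹)) := this
          _ = _ := by rw [hgdef]
      · push_neg at he
        have h1 : g xm ≤ e₀ := by
          have := isMinOn_iff.mp hxmMin _ hx₀C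
          rw [hg₀] at this
          exact this
        exact le_of_lt (lt_trans (lt_of_le_of_lt h1 he₀m) he)
    · apply csInf_le hbdd
      rw [hDdef]
      refine ⟨(xm.2.1)⁻¹, (xm.2.2.1)⁻¹, (xm.2.2.2)⁻¹,
        Matrix.isUnit_nonsing_inv_det _ hPdet1,
        Matrix.isUnit_nonsing_inv_det _ hPdet2,
        Matrix.isUnit_nonsing_inv_det _ hPdet3, ?_⟩
      rw [hgdef, hFU, hFV, hFW, hQinv1, hQinv2, hQinv3]
  refine ⟨(xm.2.1)⁻¹, (xm.2.2.1)⁻¹, (xm.2.2.2)⁻¹,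
    Matrix.isUnit_nonsing_inv_det _ hPdet1,
    Matrix.isUnit_nonsing_inv_det _ hPdet2,
    Matrix.isUnit_nonsing_inv_det _ hPdet3, ?_⟩
  rw [hdS, hFU, hFV, hFW, hQinv1, hQinv2, hQinv3, ← key, hgdef]

end ScaledGD
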